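/- arXiv:1804.08129 — 4 statements merged into one kernel-verified Lean document; each statement's English description precedes it below -/
import Mathlib

section
/- Let Λ be a lattice with ℤⁿ ⊆ Λ ⊆ ℚⁿ and standard basis frame ℰ = {e₁,…,eₙ}. Then there exists a lattice Λ' with ℤⁿ ⊆ Λ' ⊆ Λ such that every vector of Λ' has coordinates whose denominators are square-free, and d(ℰ, Λ') = d(ℰ, Λ). -/
/-- The integer lattice ℤⁿ viewed as a ℤ-submodule of ℚⁿ. -/
def intLattice (n : ℕ) : Submodule ℤ (Fin n → ℚ) :=
  Submodule.span ℤ (Set.range fun i => (Pi.single i 1 : Fin n → ℚ))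

/-- The defect d(ℰ, Λ): the smallest d such that some n − d standard basis vectors
together with d lattice vectors form a ℤ-basis of Λ. -/
noncomputable def defect (n : ℕ) (Λ : Submodule ℤ (Fin n → ℚ)) : ℕ :=
  sInf {d | ∃ (S : Finset (Fin n)) (b : Module.Basis (Fin n) ℤ Λ),
    S.card = n - d ∧ ∀ i ∈ S, ∃ j, (b j : Fin n → ℚ) = Pi.single i 1}

/-!
If `Λ` has no `ℤ`-basis indexed by `Fin n` (for instance if it is not finitely generated), the
set defining its defect is empty and `sInf ∅ = 0`, so `Λ' = ℤⁿ` works. Otherwise take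
`Λ' = Λ ∩ {x | every coordinate of x has squarefree denominator}`.

For `S ⊆ {1, …, n}`, some basis of a lattice contains `{eᵢ | i ∈ S}` iff `span {eᵢ | i ∈ S}` is
saturated in it: the quotient is then torsion-free, hence free, so the inclusion splits. Saturation
passes from `Λ'` to `Λ` one prime at a time: if `(p * k) • x ∈ span {eᵢ}` with `x ∈ Λ`, then `k • x`
has denominators dividing `p`, so it lies in `Λ'`, and saturation there gives `k • x ∈ span {eᵢ}`.
Hence the sets defining the two defects coincide.
-/

open Module Submodule

section Saturation

universe u

variable {R : Type*} {M : Type u} [CommRing R] [AddCommGroup M] [Module R M]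

def Submodule.IsSaturatedIn (N Λ : Submodule R M) : Prop :=
  ∀ x ∈ Λ, ∀ r : R, r ≠ 0 → r • x ∈ N → x ∈ N

theorem Submodule.IsSaturatedIn.mono {N Λ Λ' : Submodule R M} (h : N.IsSaturatedIn Λ)
    (hle : Λ' ≤ Λ) : N.IsSaturatedIn Λ' :=
  fun x hx => h x (hle hx)

theorem Submodule.isTorsionFree_quotient_iff [IsDomain R] (N : Submodule R M) :
    IsTorsionFree R (M ⧸ N) ↔ ∀ (r : R) (x : M), r ≠ 0 → r • x ∈ N → x ∈ N := by
  rw [isTorsionFree_iff_smul_eq_zero]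
  constructor
  · intro h r x hr hx
    have := h r (N.mkQ x) (by rwa [← map_smul, mkQ_apply, Quotient.mk_eq_zero])
    simpa [hr] using this
  · intro h r q hq
    obtain ⟨x, rfl⟩ := N.mkQ_surjective q
    rw [← map_smul, mkQ_apply, Quotient.mk_eq_zero] at hq
    by_cases hr : r = 0
    · exact .inl hr
    · exact .inr ((Quotient.mk_eq_zero N).2 (h r x hr hq))

theorem Submodule.isSaturatedIn_iff_isTorsionFree [IsDomain R] (N Λ : Submodule R M) :
    N.IsSaturatedIn Λ ↔ IsTorsionFree R (Λ ⧸ N.comap Λ.subtype) := by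
  rw [isTorsionFree_quotient_iff]
  exact ⟨fun h r x hr hx => h x x.2 r hr hx, fun h x hx r hr hrx => h r ⟨x, hx⟩ hr hrx⟩

theorem Module.Basis.isTorsionFree_quotient_span_image [IsDomain R] {κ : Type*}
    (b : Basis κ R M) (T : Set κ) : IsTorsionFree R (M ⧸ span R (b '' T)) := by
  rw [isTorsionFree_quotient_iff]
  intro r x hr hx
  rwa [b.mem_span_image, map_smul, Finsupp.support_smul_eq hr, ← b.mem_span_image] at hx

theorem LinearIndependent.exists_basis_sum_inl_eq [IsDomain R] [IsPrincipalIdealRing R]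
    [Module.Finite R M] {ι : Type*} {v : ι → M} (hv : LinearIndependent R v)
    [IsTorsionFree R (M ⧸ span R (Set.range v))] :
    ∃ (κ : Type u) (b : Basis (ι ⊕ κ) R M), ∀ i, b (.inl i) = v i := by
  set N := span R (Set.range v)
  obtain ⟨s, hs⟩ := Module.projective_lifting_property N.mkQ LinearMap.id N.mkQ_surjective
  obtain ⟨e, he⟩ := (LinearMap.exact_subtype_mkQ N).splitSurjectiveEquiv N.injective_subtype ⟨s, hs⟩
  refine ⟨_, ((Basis.span hv).prod (Free.chooseBasis R (M ⧸ N))).map e.symm, fun i => ?_⟩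
  simpa using congr($(he.1) (Basis.span hv i)).symm

theorem Submodule.IsSaturatedIn.of_prime_smul_mem [IsDomain R] [UniqueFactorizationMonoid R]
    {N Λ Λ' : Submodule R M} (h : N.IsSaturatedIn Λ')
    (hprime : ∀ x ∈ Λ, ∀ p : R, Prime p → p • x ∈ N → x ∈ Λ') : N.IsSaturatedIn Λ := by
  intro x hx r hr hrx
  induction r using UniqueFactorizationMonoid.induction_on_prime generalizing x with
  | h₁ => exact absurd rfl hr
  | h₂ u hu => exact (Submodule.smul_mem_iff_of_isUnit N hu).1 hrx
  | h₃ a p ha hp ih =>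
    rw [mul_smul] at hrx
    exact ih x hx ha (h _ (hprime _ (Λ.smul_mem a hx) p hp hrx) p hp.ne_zero hrx)

end Saturation

theorem Nat.squarefree_lcm {a b : ℕ} (ha : Squarefree a) (hb : Squarefree b) :
    Squarefree (a.lcm b) := by
  rw [Nat.squarefree_iff_factorization_le_one (Nat.lcm_ne_zero ha.ne_zero hb.ne_zero),
    Nat.factorization_lcm ha.ne_zero hb.ne_zero]
  exact fun p => sup_le ((Nat.squarefree_iff_factorization_le_one ha.ne_zero).1 ha p)
    ((Nat.squarefree_iff_factorization_le_one hb.ne_zero).1 hb p)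

def squarefreeDen (n : ℕ) : Submodule ℤ (Fin n → ℚ) where
  carrier := {x | ∀ i, Squarefree (x i).den}
  add_mem' ha hb i :=
    (Nat.squarefree_lcm (ha i) (hb i)).squarefree_of_dvd (Rat.add_den_dvd_lcm _ _)
  zero_mem' _ := by simp
  smul_mem' c x hx i := (hx i).squarefree_of_dvd (by simpa using Rat.mul_den_dvd c (x i))

def stdSpan (n : ℕ) (S : Finset (Fin n)) : Submodule ℤ (Fin n → ℚ) :=
  span ℤ (Set.range fun i : S => (Pi.single (i : Fin n) 1 : Fin n → ℚ))

section Lattice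

variable {n : ℕ}

theorem mem_intLattice_iff {x : Fin n → ℚ} :
    x ∈ intLattice n ↔ ∀ i, x i ∈ Set.range ((↑) : ℤ → ℚ) := by
  have : intLattice n = span ℤ (Set.range (Pi.basisFun ℚ (Fin n))) := by
    rw [intLattice]
    congr 2
    exact funext fun i => (Pi.basisFun_apply ℚ (Fin n) i).symm
  rw [this, Basis.mem_span_iff_repr_mem]
  rfl

theorem intLattice_le_squarefreeDen : intLattice n ≤ squarefreeDen n := fun x hx i => by
  obtain ⟨z, hz⟩ := mem_intLattice_iff.1 hx i
  rw [← hz, Rat.den_intCast]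
  exact squarefree_one

theorem mem_squarefreeDen_of_prime_smul_mem {p : ℤ} (hp : Prime p) {x : Fin n → ℚ}
    (hx : p • x ∈ intLattice n) : x ∈ squarefreeDen n := by
  intro i
  obtain ⟨z, hz⟩ := mem_intLattice_iff.1 hx i
  have hxi : x i = Rat.divInt z p := by
    rw [Rat.divInt_eq_div, hz, Pi.smul_apply, zsmul_eq_mul]
    field_simp [hp.ne_zero]
  rw [← Int.squarefree_natCast, hxi]
  exact hp.squarefree.squarefree_of_dvd (Rat.den_dvd z p)

theorem stdSpan_le_intLattice (S : Finset (Fin n)) : stdSpan n S ≤ intLattice n :=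
  span_mono (Set.range_comp_subset_range Subtype.val fun i => Pi.single i 1)

theorem isSaturatedIn_inf_squarefreeDen_iff {N Λ : Submodule ℤ (Fin n → ℚ)}
    (hN : N ≤ intLattice n) : N.IsSaturatedIn (Λ ⊓ squarefreeDen n) ↔ N.IsSaturatedIn Λ :=
  ⟨fun h => h.of_prime_smul_mem fun _ hx _ hp hpx =>
    ⟨hx, mem_squarefreeDen_of_prime_smul_mem hp (hN hpx)⟩, fun h => h.mono inf_le_left⟩

theorem span_range_eq_comap_stdSpan {Λ : Submodule ℤ (Fin n → ℚ)} {S : Finset (Fin n)}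
    {w : S → Λ} (hw : ∀ i, (w i : Fin n → ℚ) = Pi.single (i : Fin n) 1) :
    span ℤ (Set.range w) = (stdSpan n S).comap Λ.subtype := by
  have : (Set.range fun i : S => (Pi.single (i : Fin n) 1 : Fin n → ℚ)) =
      Λ.subtype '' Set.range w := by
    rw [← Set.range_comp]
    exact congrArg Set.range (funext fun i => (hw i).symm)
  rw [stdSpan, this, ← map_span, comap_map_eq_of_injective Λ.injective_subtype]

def latticeSingle {Λ : Submodule ℤ (Fin n → ℚ)} (hΛ : intLattice n ≤ Λ) (i : Fin n) : Λ :=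
  ⟨Pi.single i 1, hΛ (subset_span ⟨i, rfl⟩)⟩

theorem linearIndependent_latticeSingle {Λ : Submodule ℤ (Fin n → ℚ)} (hΛ : intLattice n ≤ Λ) :
    LinearIndependent ℤ (latticeSingle hΛ) :=
  .of_comp Λ.subtype ((Pi.linearIndependent_single_one (Fin n) ℚ).restrict_scalars' ℤ)

theorem finrank_eq_of_intLattice_le_of_le {Λ Λ' : Submodule ℤ (Fin n → ℚ)} [Module.Finite ℤ Λ']
    (b : Basis (Fin n) ℤ Λ) (h₁ : intLattice n ≤ Λ') (h₂ : Λ' ≤ Λ) : finrank ℤ Λ' = n := by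
  have : Module.Finite ℤ Λ := .of_basis b
  refine le_antisymm ?_ ?_
  · calc finrank ℤ Λ' ≤ finrank ℤ Λ := LinearMap.finrank_le_finrank_of_injective
          (inclusion_injective h₂)
      _ = n := by simp [finrank_eq_card_basis b]
  · simpa using (linearIndependent_latticeSingle h₁).fintype_card_le_finrank

theorem exists_basis_iff_isSaturatedIn {Λ : Submodule ℤ (Fin n → ℚ)} [Module.Finite ℤ Λ]
    (hrank : finrank ℤ Λ = n) (hΛ : intLattice n ≤ Λ) (S : Finset (Fin n)) :
    (∃ b : Basis (Fin n) ℤ Λ, ∀ i ∈ S, ∃ j, (b j : Fin n → ℚ) = Pi.single i 1) ↔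
      (stdSpan n S).IsSaturatedIn Λ := by
  rw [isSaturatedIn_iff_isTorsionFree]
  constructor
  · rintro ⟨b, hb⟩
    choose! j hj using hb
    rw [← span_range_eq_comap_stdSpan (w := fun i : S => b (j i)) fun i => hj i i.2]
    have := b.isTorsionFree_quotient_span_image (Set.range fun i : S => j i)
    rwa [← Set.range_comp] at this
  · intro hsat
    rw [← span_range_eq_comap_stdSpan (w := fun i : S => latticeSingle hΛ i) fun _ => rfl] at hsat
    obtain ⟨κ, b, hb⟩ := LinearIndependent.exists_basis_sum_inl_eq
      (v := fun i : S => latticeSingle hΛ i)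
      ((linearIndependent_latticeSingle hΛ).comp _ Subtype.val_injective)
    have := Module.Finite.finite_basis b
    have hcard : Nat.card (S ⊕ κ) = n := (finrank_eq_nat_card_basis b).symm.trans hrank
    set e := Finite.equivFinOfCardEq hcard
    exact ⟨b.reindex e, fun i hi => ⟨e (.inl ⟨i, hi⟩), by simp [hb, latticeSingle]⟩⟩

theorem defect_eq_sInf_isSaturatedIn {Λ : Submodule ℤ (Fin n → ℚ)} [Module.Finite ℤ Λ]
    (hrank : finrank ℤ Λ = n) (hΛ : intLattice n ≤ Λ) :
    defect n Λ =
      sInf {d | ∃ S : Finset (Fin n), S.card = n - d ∧ (stdSpan n S).IsSaturatedIn Λ} := by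
  simp only [defect, exists_and_left, exists_basis_iff_isSaturatedIn hrank hΛ]

theorem defect_eq_zero_of_isEmpty {Λ : Submodule ℤ (Fin n → ℚ)}
    [IsEmpty (Basis (Fin n) ℤ Λ)] : defect n Λ = 0 := by
  simp [defect]

theorem defect_intLattice : defect n (intLattice n) = 0 := by
  have hli := (Pi.linearIndependent_single_one (Fin n) ℚ).restrict_scalars' ℤ
  refine Nat.sInf_eq_zero.2 (.inl ⟨.univ, Basis.span hli, by simp, fun i _ => ⟨i, ?_⟩⟩)
  exact congrArg Subtype.val (Basis.span_apply hli i)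

end Lattice

/-- there is a sublattice Λ' with ℤⁿ ⊆ Λ' ⊆ Λ all of whose vectors have
square-free coordinate denominators, and with the same defect as Λ. -/
theorem stmt2 (n : ℕ) (Λ : Submodule ℤ (Fin n → ℚ)) (hΛ : intLattice n ≤ Λ) :
    ∃ Λ' : Submodule ℤ (Fin n → ℚ), intLattice n ≤ Λ' ∧ Λ' ≤ Λ ∧
      (∀ x ∈ Λ', ∀ i, Squarefree (x i).den) ∧ defect n Λ' = defect n Λ := by
  cases isEmpty_or_nonempty (Basis (Fin n) ℤ Λ) with
  | inl _ =>
    exact ⟨intLattice n, le_rfl, hΛ, fun x hx => intLattice_le_squarefreeDen hx,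
      by rw [defect_intLattice, defect_eq_zero_of_isEmpty]⟩
  | inr hbasis =>
    obtain ⟨b⟩ := hbasis
    have hsqf : intLattice n ≤ Λ ⊓ squarefreeDen n := le_inf hΛ intLattice_le_squarefreeDen
    have : Module.Finite ℤ Λ := .of_basis b
    have : Module.Finite ℤ ↥(Λ ⊓ squarefreeDen n) :=
      .of_injective (inclusion inf_le_left) (inclusion_injective _)
    refine ⟨Λ ⊓ squarefreeDen n, hsqf, inf_le_left, fun x hx => hx.2, ?_⟩
    rw [defect_eq_sInf_isSaturatedIn (finrank_eq_of_intLattice_le_of_le b hsqf inf_le_left) hsqf,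
      defect_eq_sInf_isSaturatedIn (by simp [finrank_eq_card_basis b]) hΛ]
    simp only [isSaturatedIn_inf_squarefreeDen_iff (stdSpan_le_intLattice _)]
end

section
/- Let a₁,…,aₘ ∈ ℚⁿ with common denominator q = p₁⋯pₛ square-free (the pⱼ distinct primes), let A be the m×n integer matrix with rows q·aᵢ, and let Λ = ⟨ℤⁿ, a₁,…,aₘ⟩_ℤ. Suppose M ⊆ {1,…,n} is a set of coordinate indices such that for every j ∈ {1,…,s}, M contains a set of rank_j(A) column indices whose corresponding columns of A are linearly independent over 𝔽_{pⱼ}. Then d(ℰ, Λ) ≤ |M|, where ℰ is the standard basis of ℤⁿ. -/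
open Matrix Module Submodule Set

theorem Matrix.vecMul_eq_zero_of_eq_zero_on {K m n : Type*} [Field K] [Fintype m] [Fintype n]
    (B : Matrix m n K) {T : Finset n} (hli : LinearIndependent K fun j : T => B.col j)
    (hcard : T.card = B.rank) {k : m → K} (hk : ∀ j ∈ T, (k ᵥ* B) j = 0) : k ᵥ* B = 0 := by
  have hspan : span K (range fun j : T => B.col j) = span K (range B.col) :=
    eq_of_le_of_finrank_eq (span_mono (range_comp_subset_range _ _))
      (by rw [finrank_span_eq_card hli, Fintype.card_coe, hcard, rank_eq_finrank_span_cols])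
  have hker : span K (range B.col) ≤ LinearMap.ker (dotProductBilin K K k) := by
    rw [← hspan, span_le]
    rintro _ ⟨j, rfl⟩
    exact hk j j.2
  funext j
  exact hker (subset_span ⟨j, rfl⟩)

theorem Matrix.prime_dvd_vecMul_of_dvd_on {m n : Type*} [Fintype m] [Fintype n] {p : ℕ}
    [Fact p.Prime] (A : Matrix m n ℤ) {T : Finset n}
    (hli : LinearIndependent (ZMod p) fun j : T => (A.map (Int.cast : ℤ → ZMod p)).col j)
    (hcard : T.card = (A.map (Int.cast : ℤ → ZMod p)).rank) {k : m → ℤ}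
    (hk : ∀ j ∈ T, (p : ℤ) ∣ (k ᵥ* A) j) (j : n) : (p : ℤ) ∣ (k ᵥ* A) j := by
  have hcast : ∀ j, (((k ᵥ* A) j : ℤ) : ZMod p) = ((Int.cast ∘ k) ᵥ* A.map Int.cast) j :=
    RingHom.map_vecMul (Int.castRingHom (ZMod p)) A k
  rw [← ZMod.intCast_zmod_eq_zero_iff_dvd, hcast,
    vecMul_eq_zero_of_eq_zero_on _ hli hcard fun j hj => ?_]
  · rfl
  · rw [← hcast, ZMod.intCast_zmod_eq_zero_iff_dvd]
    exact hk j hj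

theorem Squarefree.natCast_dvd_of_forall_prime_dvd {q : ℕ} {z : ℤ} (hq : Squarefree q)
    (h : ∀ p : ℕ, p.Prime → p ∣ q → (p : ℤ) ∣ z) : (q : ℤ) ∣ z := by
  rw [← Nat.prod_primeFactors_of_squarefree hq, Int.natCast_dvd]
  refine Finset.prod_primes_dvd _ (fun p hp => (Nat.prime_of_mem_primeFactors hp).prime)
    fun p hp => Int.natCast_dvd.mp ?_
  exact h p (Nat.prime_of_mem_primeFactors hp) (Nat.dvd_of_mem_primeFactors hp)

theorem Module.Basis.exists_sumElim_of_exact {R N L P κ σ : Type*} [Ring R] [AddCommGroup N]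
    [AddCommGroup L] [AddCommGroup P] [Module R N] [Module R L] [Module R P]
    {f : N →ₗ[R] L} {g : L →ₗ[R] P} (hfg : Function.Exact f g) (hf : Function.Injective f)
    (hg : Function.Surjective g) (bN : Basis κ R N) (bP : Basis σ R P) :
    ∃ b : Basis (κ ⊕ σ) R L, ∀ i, b (.inl i) = f (bN i) := by
  have := Module.Projective.of_basis bP
  obtain ⟨s, hs⟩ := Module.projective_lifting_property g LinearMap.id hg
  let e := (hfg.splitSurjectiveEquiv hf ⟨s, hs⟩).1
  have hfe : f = e.symm ∘ₗ LinearMap.inl R N P := (hfg.splitSurjectiveEquiv hf ⟨s, hs⟩).2.1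
  exact ⟨(bN.prod bP).map e.symm, fun i => by simp [hfe]⟩

theorem mem_intLattice_iff_s4 {n : ℕ} {x : Fin n → ℚ} :
    x ∈ intLattice n ↔ ∃ z : Fin n → ℤ, (fun j => (z j : ℚ)) = x := by
  simp only [intLattice, mem_span_range_iff_exists_fun]
  refine exists_congr fun z => Eq.congr_left ?_
  ext j
  simp [Pi.single_apply]

theorem finrank_eq_of_intLattice_le {n : ℕ} {Λ : Submodule ℤ (Fin n → ℚ)}
    (hle : intLattice n ≤ Λ) (hfg : Λ.FG) : finrank ℤ Λ = n := by
  have := Module.Finite.iff_fg.mpr hfg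
  apply le_antisymm
  · let b := Module.Free.chooseBasis ℤ Λ
    have hli : LinearIndependent ℚ (Λ.subtype ∘ b) :=
      (LinearIndependent.iff_fractionRing ℤ ℚ).mp (b.linearIndependent.map' _ Λ.ker_subtype)
    simpa [finrank_eq_card_chooseBasisIndex] using
      hli.fintype_card_le_finrank.trans_eq (finrank_fin_fun ℚ)
  · have hli : LinearIndependent ℤ fun i => (⟨Pi.single i 1, hle (subset_span ⟨i, rfl⟩)⟩ : Λ) :=
      .of_comp Λ.subtype ((Pi.linearIndependent_single_one (Fin n) ℚ).restrict_scalars' ℤ)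
    simpa using hli.fintype_card_le_finrank

theorem defect_le_of_basis {n : ℕ} {Λ : Submodule ℤ (Fin n → ℚ)} (M : Finset (Fin n))
    {σ : Type*} [Fintype σ] (hΛ : finrank ℤ Λ = n) (b : Basis ({j // j ∉ M} ⊕ σ) ℤ Λ)
    (hb : ∀ j, (b (.inl j) : Fin n → ℚ) = Pi.single (j : Fin n) 1) : defect n Λ ≤ M.card := by
  have hcard : Fintype.card ({j // j ∉ M} ⊕ σ) = n := by rw [← finrank_eq_card_basis b, hΛ]
  let e := Fintype.equivFinOfCardEq hcard
  refine Nat.sInf_le ⟨Mᶜ, b.reindex e, by simp [Finset.card_compl], fun i hi =>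
    ⟨e (.inl ⟨i, Finset.mem_compl.mp hi⟩), by simp [hb]⟩⟩

def castExtendByZero {n : ℕ} (M : Finset (Fin n)) : ({j // j ∉ M} → ℤ) →ₗ[ℤ] Fin n → ℚ where
  toFun z j := if h : j ∈ M then 0 else z ⟨j, h⟩
  map_add' z w := by ext j; by_cases h : j ∈ M <;> simp [h]
  map_smul' c z := by ext j; by_cases h : j ∈ M <;> simp [h]

section castExtendByZero

variable {n : ℕ} (M : Finset (Fin n))

theorem castExtendByZero_apply (z : {j // j ∉ M} → ℤ) (j : Fin n) :
    castExtendByZero M z j = if h : j ∈ M then 0 else (z ⟨j, h⟩ : ℚ) :=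
  rfl

theorem castExtendByZero_mem_intLattice (z : {j // j ∉ M} → ℤ) :
    castExtendByZero M z ∈ intLattice n :=
  mem_intLattice_iff_s4.mpr ⟨fun j => if h : j ∈ M then 0 else z ⟨j, h⟩,
    funext fun j => by by_cases h : j ∈ M <;> simp [castExtendByZero_apply, h]⟩

theorem castExtendByZero_injective : Function.Injective (castExtendByZero M) := by
  intro z w h
  funext i
  simpa [castExtendByZero_apply, i.2] using congr_fun h i

theorem castExtendByZero_single (i : {j // j ∉ M}) :
    castExtendByZero M (Pi.single i 1) = Pi.single (i : Fin n) 1 := by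
  funext j
  by_cases h : j ∈ M
  · simp [castExtendByZero_apply, h, ne_of_mem_of_not_mem h i.2]
  · simp [castExtendByZero_apply, h, Pi.single_apply, Subtype.ext_iff]

theorem castExtendByZero_eq_zero_on {j : Fin n} (hj : j ∈ M) (z : {j // j ∉ M} → ℤ) :
    castExtendByZero M z j = 0 := by
  simp [castExtendByZero_apply, hj]

theorem mem_range_castExtendByZero {x : Fin n → ℚ} (hx : x ∈ intLattice n)
    (hxM : ∀ j ∈ M, x j = 0) : x ∈ LinearMap.range (castExtendByZero M) := by
  obtain ⟨z, rfl⟩ := mem_intLattice_iff_s4.mp hx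
  refine ⟨fun i => z i, funext fun j => ?_⟩
  by_cases h : j ∈ M
  · simp [castExtendByZero_apply, h, hxM j h]
  · simp [castExtendByZero_apply, h]

end castExtendByZero

theorem defect_le_of_eq_zero_on_imp_mem_intLattice {n : ℕ} {Λ : Submodule ℤ (Fin n → ℚ)}
    (hle : intLattice n ≤ Λ) (hfg : Λ.FG) (M : Finset (Fin n))
    (hM : ∀ x ∈ Λ, (∀ j ∈ M, x j = 0) → x ∈ intLattice n) : defect n Λ ≤ M.card := by
  have := Module.Finite.iff_fg.mpr hfg
  let extend : ({j // j ∉ M} → ℤ) →ₗ[ℤ] Λ :=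
    (castExtendByZero M).codRestrict Λ fun z => hle (castExtendByZero_mem_intLattice M z)
  let restrict : Λ →ₗ[ℤ] M → ℚ := LinearMap.funLeft ℤ ℚ Subtype.val ∘ₗ Λ.subtype
  have hexact : Function.Exact extend restrict.rangeRestrict := by
    intro x
    have hzero : restrict.rangeRestrict x = 0 ↔ ∀ j ∈ M, (x : Fin n → ℚ) j = 0 := by
      simp [restrict, Subtype.ext_iff, funext_iff]
    rw [hzero]
    constructor
    · intro hxM
      obtain ⟨z, hz⟩ := mem_range_castExtendByZero M (hM x x.2 hxM) hxM
      exact ⟨z, Subtype.ext hz⟩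
    · rintro ⟨z, rfl⟩ j hj
      exact castExtendByZero_eq_zero_on M hj z
  obtain ⟨b, hb⟩ := (Pi.basisFun ℤ _).exists_sumElim_of_exact hexact
    ((LinearMap.injective_codRestrict_iff _).mpr (castExtendByZero_injective M))
    restrict.surjective_rangeRestrict (Module.Free.chooseBasis ℤ (LinearMap.range restrict))
  refine defect_le_of_basis M (finrank_eq_of_intLattice_le hle hfg) b fun i => ?_
  simp [hb, extend, castExtendByZero_single]

theorem mem_intLattice_of_eq_zero_on {n m : ℕ} {a : Fin m → Fin n → ℚ} {q : ℕ}
    (hqsf : Squarefree q) {A : Matrix (Fin m) (Fin n) ℤ} (hA : ∀ i j, (q : ℚ) * a i j = A i j)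
    {M : Finset (Fin n)}
    (hM : ∀ p : ℕ, p.Prime → p ∣ q →
      ∃ T : Finset (Fin n), T ⊆ M ∧
        T.card = (A.map (Int.cast : ℤ → ZMod p)).rank ∧
        LinearIndependent (ZMod p) fun j : T => fun i : Fin m => (A i j : ZMod p))
    {x : Fin n → ℚ} (hx : x ∈ intLattice n ⊔ span ℤ (range a)) (hxM : ∀ j ∈ M, x j = 0) :
    x ∈ intLattice n := by
  obtain ⟨u, hu, v, hv, rfl⟩ := mem_sup.mp hx
  obtain ⟨z, rfl⟩ := mem_intLattice_iff_s4.mp hu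
  obtain ⟨k, rfl⟩ := (mem_span_range_iff_exists_fun ℤ).mp hv
  have hqv : ∀ j, (q : ℚ) * (∑ i, k i • a i) j = (k ᵥ* A) j := by
    intro j
    simp [Finset.sum_apply, Finset.mul_sum, vecMul, dotProduct, ← hA, mul_left_comm]
  have hdvdM : ∀ j ∈ M, (q : ℤ) ∣ (k ᵥ* A) j := by
    intro j hj
    have hxj : (z j : ℚ) + (∑ i, k i • a i) j = 0 := hxM j hj
    have h : ((k ᵥ* A) j : ℚ) = q * -(z j : ℚ) := by linear_combination q * hxj - hqv j
    exact ⟨-z j, by exact_mod_cast h⟩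
  have hdvd : ∀ j, (q : ℤ) ∣ (k ᵥ* A) j := fun j =>
    hqsf.natCast_dvd_of_forall_prime_dvd fun p hp hpq => by
      have := Fact.mk hp
      obtain ⟨T, hTM, hcard, hli⟩ := hM p hp hpq
      exact A.prime_dvd_vecMul_of_dvd_on hli hcard
        (fun j hj => (Int.natCast_dvd_natCast.mpr hpq).trans (hdvdM j (hTM hj))) j
  choose w hw using hdvd
  refine mem_intLattice_iff_s4.mpr ⟨z + w, funext fun j => ?_⟩
  have hq : (q : ℚ) ≠ 0 := by exact_mod_cast hqsf.ne_zero
  apply mul_left_cancel₀ hq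
  simp only [Pi.add_apply, Int.cast_add, mul_add, hqv, hw]
  push_cast
  rfl

theorem stmt4_general (n m : ℕ) (a : Fin m → (Fin n → ℚ)) (q : ℕ)
    (hqsf : Squarefree q)
    (A : Matrix (Fin m) (Fin n) ℤ)
    (hA : ∀ i j, (q : ℚ) * a i j = (A i j : ℚ))
    (M : Finset (Fin n))
    (hM : ∀ p : ℕ, p.Prime → p ∣ q →
      ∃ T : Finset (Fin n), T ⊆ M ∧
        T.card = (A.map (Int.cast : ℤ → ZMod p)).rank ∧
        LinearIndependent (ZMod p) fun j : T => fun i : Fin m => (A i j : ZMod p)) :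
    defect n (intLattice n ⊔ Submodule.span ℤ (Set.range a)) ≤ M.card :=
  defect_le_of_eq_zero_on_imp_mem_intLattice le_sup_left
    ((fg_span (finite_range _)).sup (fg_span (finite_range a))) M
    fun _ hx hxM => mem_intLattice_of_eq_zero_on hqsf hA hM hx hxM

/-- if M contains, for every prime p ∣ q, the indices of rank_p(A) columns
of A that are linearly independent over 𝔽_p, then d(ℰ, Λ) ≤ |M|. -/
theorem stmt4 (n m : ℕ) (a : Fin m → (Fin n → ℚ)) (q : ℕ) (hq0 : 0 < q)
    (hqsf : Squarefree q)
    (A : Matrix (Fin m) (Fin n) ℤ)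
    (hA : ∀ i j, (q : ℚ) * a i j = (A i j : ℚ))
    (M : Finset (Fin n))
    (hM : ∀ p : ℕ, p.Prime → p ∣ q →
      ∃ T : Finset (Fin n), T ⊆ M ∧
        T.card = (A.map (Int.cast : ℤ → ZMod p)).rank ∧
        LinearIndependent (ZMod p) fun j : T => fun i : Fin m => (A i j : ZMod p)) :
    defect n (intLattice n ⊔ Submodule.span ℤ (Set.range a)) ≤ M.card :=
  stmt4_general n m a q hqsf A hA M hM
end

section
/- Let a₁,…,aₘ ∈ ℚⁿ have square-free common denominator q = p₁⋯pₛ, set Λ_k = ⟨ℤⁿ, a₁,…,a_k⟩_ℤ, and for each k let q_k be the product of those primes pⱼ dividing q for which q·a_k does not lie in the 𝔽_{pⱼ}-span of q·a₁,…,q·a_{k−1}. Then the index [Λ_k : Λ_{k−1}] equals q_k. -/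
/-- Λ_t = ⟨ℤⁿ, a₁,…,a_t⟩_ℤ. -/
def stepLattice (n m : ℕ) (a : Fin m → (Fin n → ℚ)) (t : ℕ) : Submodule ℤ (Fin n → ℚ) :=
  intLattice n ⊔ Submodule.span ℤ (a '' {i : Fin m | (i : ℕ) < t})

lemma sqf_dvd_of_prime_dvd {a b : ℕ} (ha : Squarefree a)
    (h : ∀ p : ℕ, p.Prime → p ∣ a → p ∣ b) : a ∣ b := by
  rw [← Nat.prod_primeFactors_of_squarefree ha]
  exact Finset.prod_primes_dvd b
    (fun p hp => (Nat.prime_of_mem_primeFactors hp).prime)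
    (fun p hp => h p (Nat.prime_of_mem_primeFactors hp) (Nat.dvd_of_mem_primeFactors hp))

lemma mem_intLattice {n : ℕ} {v : Fin n → ℚ} :
    v ∈ intLattice n ↔ ∀ j, ∃ z : ℤ, v j = (z : ℚ) := by
  constructor
  · intro hv
    induction hv using Submodule.span_induction with
    | mem x hx =>
      obtain ⟨i, rfl⟩ := hx
      intro j
      by_cases h : j = i
      · exact ⟨1, by subst h; simp⟩
      · exact ⟨0, by simp [Pi.single_apply, h]⟩
    | zero => exact fun j => ⟨0, by simp⟩
    | add x y _ _ hx hy =>
      intro j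
      obtain ⟨z1, h1⟩ := hx j; obtain ⟨z2, h2⟩ := hy j
      exact ⟨z1 + z2, by simp [h1, h2]⟩
    | smul c x _ hx =>
      intro j
      obtain ⟨z, hz⟩ := hx j
      exact ⟨c * z, by simp [hz, zsmul_eq_mul]⟩
  · intro h
    choose z hz using h
    have hv : v = ∑ j, (z j) • (Pi.single j 1 : Fin n → ℚ) := by
      funext j'
      rw [Finset.sum_apply]
      simp [Pi.single_apply, hz, zsmul_eq_mul]
    rw [hv]
    exact Submodule.sum_mem _ fun j _ =>
      Submodule.smul_mem _ _ (Submodule.subset_span ⟨j, rfl⟩)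

lemma mem_spanImage {n m : ℕ} {a : Fin m → (Fin n → ℚ)} {t : ℕ} {x : Fin n → ℚ} :
    x ∈ Submodule.span ℤ (a '' {i : Fin m | (i : ℕ) < t}) ↔
      ∃ c : Fin m → ℤ, (∀ i : Fin m, ¬ ((i : ℕ) < t) → c i = 0) ∧ x = ∑ i, c i • a i := by
  constructor
  · intro hx
    induction hx using Submodule.span_induction with
    | mem y hy =>
      obtain ⟨i, hi, rfl⟩ := hy
      refine ⟨fun i' => if i' = i then 1 else 0, ?_, ?_⟩
      · intro i' hi'
        by_cases h : i' = i
        · exact absurd (h ▸ hi) hi'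
        · simp [h]
      · simp [ite_smul]
    | zero => exact ⟨0, fun _ _ => rfl, by simp⟩
    | add u w _ _ hu hw =>
      obtain ⟨c1, hc1, rfl⟩ := hu
      obtain ⟨c2, hc2, rfl⟩ := hw
      refine ⟨c1 + c2, fun i hi => by simp [hc1 i hi, hc2 i hi], ?_⟩
      rw [← Finset.sum_add_distrib]
      simp [add_smul]
    | smul r y _ hy =>
      obtain ⟨c, hc, rfl⟩ := hy
      refine ⟨r • c, fun i hi => by simp [hc i hi], ?_⟩
      rw [Finset.smul_sum]
      simp [mul_smul]
  · rintro ⟨c, hc, rfl⟩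
    refine Submodule.sum_mem _ fun i _ => ?_
    by_cases h : (i : ℕ) < t
    · exact Submodule.smul_mem _ _ (Submodule.subset_span ⟨i, h, rfl⟩)
    · simp [hc i h]

lemma mem_stepLattice {n m : ℕ} {a : Fin m → (Fin n → ℚ)} {t : ℕ} {x : Fin n → ℚ} :
    x ∈ stepLattice n m a t ↔
      ∃ (v : Fin n → ℚ) (c : Fin m → ℤ), (∀ j, ∃ z : ℤ, v j = (z : ℚ)) ∧
        (∀ i : Fin m, ¬ ((i : ℕ) < t) → c i = 0) ∧ x = v + ∑ i, c i • a i := by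
  rw [stepLattice, Submodule.mem_sup]
  constructor
  · rintro ⟨v, hv, y, hy, rfl⟩
    obtain ⟨c, hc, rfl⟩ := mem_spanImage.mp hy
    exact ⟨v, c, mem_intLattice.mp hv, hc, rfl⟩
  · rintro ⟨v, c, hv, hc, rfl⟩
    exact ⟨v, mem_intLattice.mpr hv, _, mem_spanImage.mpr ⟨c, hc, rfl⟩, rfl⟩

lemma smul_mem_step_iff {n m : ℕ} {a : Fin m → (Fin n → ℚ)} {q : ℕ} (hq0 : 0 < q)
    {A : Matrix (Fin m) (Fin n) ℤ} (hA : ∀ i j, (q : ℚ) * a i j = (A i j : ℚ))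
    (k : Fin m) (z : ℤ) :
    z • a k ∈ stepLattice n m a (k : ℕ) ↔
      ∃ c : Fin m → ℤ, (∀ i : Fin m, ¬ ((i : ℕ) < (k : ℕ)) → c i = 0) ∧
        ∀ j, (q : ℤ) ∣ z * A k j - ∑ i, c i * A i j := by
  have hq : (q : ℚ) ≠ 0 := by positivity
  constructor
  · intro hmem
    obtain ⟨v, c, hv, hc, heq⟩ := mem_stepLattice.mp hmem
    choose w hw using hv
    refine ⟨c, hc, fun j => ?_⟩
    have eval : (z : ℚ) * a k j = (w j : ℚ) + ∑ i, (c i : ℚ) * a i j := by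
      have := congrFun heq j
      simpa [Finset.sum_apply, zsmul_eq_mul, hw] using this
    have key : (z : ℚ) * (A k j : ℚ) = (q : ℚ) * (w j : ℚ) + ∑ i, (c i : ℚ) * (A i j : ℚ) := by
      calc (z : ℚ) * (A k j : ℚ) = (q : ℚ) * ((z : ℚ) * a k j) := by rw [← hA k j]; ring
      _ = (q : ℚ) * ((w j : ℚ) + ∑ i, (c i : ℚ) * a i j) := by rw [eval]
      _ = (q : ℚ) * (w j : ℚ) + ∑ i, (c i : ℚ) * ((q : ℚ) * a i j) := by
            rw [mul_add, Finset.mul_sum]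
            congr 1
            exact Finset.sum_congr rfl fun i _ => by ring
      _ = (q : ℚ) * (w j : ℚ) + ∑ i, (c i : ℚ) * (A i j : ℚ) := by simp_rw [hA]
    have keyZ : z * A k j = (q : ℤ) * w j + ∑ i, c i * A i j := by exact_mod_cast key
    exact ⟨w j, by linarith⟩
  · rintro ⟨c, hc, hdvd⟩
    choose w hw using hdvd
    refine mem_stepLattice.mpr ⟨fun j => (w j : ℚ), c, fun j => ⟨w j, rfl⟩, hc, ?_⟩
    funext j
    have hwQ : (z : ℚ) * (A k j : ℚ) - ∑ i, (c i : ℚ) * (A i j : ℚ) = (q : ℚ) * (w j : ℚ) := by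
      exact_mod_cast hw j
    have goalQ : (z : ℚ) * a k j = (w j : ℚ) + ∑ i, (c i : ℚ) * a i j := by
      apply mul_left_cancel₀ hq
      calc (q : ℚ) * ((z : ℚ) * a k j) = (z : ℚ) * ((q : ℚ) * a k j) := by ring
      _ = (z : ℚ) * (A k j : ℚ) := by rw [hA k j]
      _ = (q : ℚ) * (w j : ℚ) + ∑ i, (c i : ℚ) * (A i j : ℚ) := by rw [← hwQ]; ring
      _ = (q : ℚ) * (w j : ℚ) + ∑ i, (c i : ℚ) * ((q : ℚ) * a i j) := by simp_rw [hA]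
      _ = (q : ℚ) * ((w j : ℚ) + ∑ i, (c i : ℚ) * a i j) := by
            rw [mul_add, Finset.mul_sum]
            congr 1
            exact Finset.sum_congr rfl fun i _ => by ring
    simpa [Finset.sum_apply, zsmul_eq_mul] using goalQ

lemma mem_span_of_coeffs {n m : ℕ} {A : Matrix (Fin m) (Fin n) ℤ} {k : Fin m}
    {p : ℕ} (hp : p.Prime) {z : ℤ} (hz : ¬ (p : ℤ) ∣ z)
    {c : Fin m → ℤ} (hc : ∀ i : Fin m, ¬ ((i : ℕ) < (k : ℕ)) → c i = 0)
    (hdvd : ∀ j, (p : ℤ) ∣ z * A k j - ∑ i, c i * A i j) :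
    (fun j => (A k j : ZMod p)) ∈
      Submodule.span (ZMod p)
        {w : Fin n → ZMod p | ∃ i : Fin m, i < k ∧ w = fun j => (A i j : ZMod p)} := by
  haveI : Fact p.Prime := ⟨hp⟩
  have hzbar : (z : ZMod p) ≠ 0 := fun h => hz ((ZMod.intCast_zmod_eq_zero_iff_dvd z p).mp h)
  have hj : ∀ j, (z : ZMod p) * (A k j : ZMod p) = ∑ i, (c i : ZMod p) * (A i j : ZMod p) := by
    intro j
    have h0 : ((z * A k j - ∑ i, c i * A i j : ℤ) : ZMod p) = 0 :=
      (ZMod.intCast_zmod_eq_zero_iff_dvd _ p).mpr (hdvd j)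
    push_cast at h0
    linear_combination h0
  have hrep : (fun j => (A k j : ZMod p)) =
      ∑ i, ((z : ZMod p)⁻¹ * (c i : ZMod p)) • (fun j => (A i j : ZMod p)) := by
    funext j
    rw [Finset.sum_apply]
    simp only [Pi.smul_apply, smul_eq_mul]
    have : ∑ i, (z : ZMod p)⁻¹ * (c i : ZMod p) * (A i j : ZMod p)
        = (z : ZMod p)⁻¹ * ∑ i, (c i : ZMod p) * (A i j : ZMod p) := by
      rw [Finset.mul_sum]
      exact Finset.sum_congr rfl fun i _ => by ring
    rw [this, ← hj j, ← mul_assoc, inv_mul_cancel₀ hzbar, one_mul]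
  rw [hrep]
  refine Submodule.sum_mem _ fun i _ => ?_
  by_cases h : (i : ℕ) < (k : ℕ)
  · exact Submodule.smul_mem _ _ (Submodule.subset_span ⟨i, h, rfl⟩)
  · simp [hc i h]

lemma coeffs_of_mem_span {n m : ℕ} {A : Matrix (Fin m) (Fin n) ℤ} {k : Fin m}
    {p : ℕ} (hp : p.Prime)
    (hmem : (fun j => (A k j : ZMod p)) ∈
      Submodule.span (ZMod p)
        {w : Fin n → ZMod p | ∃ i : Fin m, i < k ∧ w = fun j => (A i j : ZMod p)}) :
    ∃ c : Fin m → ℤ, (∀ i : Fin m, ¬ ((i : ℕ) < (k : ℕ)) → c i = 0) ∧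
      ∀ j, (p : ℤ) ∣ A k j - ∑ i, c i * A i j := by
  haveI : Fact p.Prime := ⟨hp⟩
  have hset : {w : Fin n → ZMod p | ∃ i : Fin m, i < k ∧ w = fun j => (A i j : ZMod p)}
      = Set.range (fun i : {i : Fin m // i < k} => fun j => (A i.1 j : ZMod p)) := by
    ext w
    constructor
    · rintro ⟨i, hik, rfl⟩; exact ⟨⟨i, hik⟩, rfl⟩
    · rintro ⟨⟨i, hik⟩, rfl⟩; exact ⟨i, hik, rfl⟩
  rw [hset, Submodule.mem_span_range_iff_exists_fun] at hmem
  obtain ⟨c, hc⟩ := hmem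
  classical
  refine ⟨fun i => if h : i < k then ((c ⟨i, h⟩).val : ℤ) else 0,
    fun i hi => dif_neg (fun h => hi (Fin.lt_def.mp h)), fun j => ?_⟩
  rw [← ZMod.intCast_zmod_eq_zero_iff_dvd]
  push_cast
  have hcj : ∑ i : {i : Fin m // i < k}, c i * (A i.1 j : ZMod p) = (A k j : ZMod p) := by
    have := congrFun hc j
    simpa [Finset.sum_apply] using this
  have hsum : ∑ i : Fin m,
      (((if h : i < k then ((c ⟨i, h⟩).val : ℤ) else 0 : ℤ)) : ZMod p) * (A i j : ZMod p)
      = ∑ i : {i : Fin m // i < k}, c i * (A i.1 j : ZMod p) := by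
    rw [← Finset.sum_filter_of_ne (p := fun i : Fin m => i < k) (s := Finset.univ)
      (f := fun i => (((if h : i < k then ((c ⟨i, h⟩).val : ℤ) else 0 : ℤ)) : ZMod p) * (A i j : ZMod p))
      (fun x _ hx => by by_contra h; simp [dif_neg h] at hx)]
    rw [Finset.sum_subtype (p := fun i : Fin m => i < k)
      (f := fun i => (((if h : i < k then ((c ⟨i, h⟩).val : ℤ) else 0 : ℤ)) : ZMod p) * (A i j : ZMod p))
      (Finset.univ.filter (fun i : Fin m => i < k)) (fun i => by simp)]
    refine Finset.sum_congr rfl fun i _ => ?_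
    rw [dif_pos i.2]
    push_cast [ZMod.natCast_val, ZMod.cast_id]
    rfl
  rw [hsum, hcj, sub_self]

/-- [Λ_{k+1} : Λ_k] = q_k, where q_k is the (square-free) product of those
primes p ∣ q for which q·a_k mod p does not lie in the 𝔽_p-span of q·a₁,…,q·a_{k-1}. -/
theorem stmt7 (n m : ℕ) (a : Fin m → (Fin n → ℚ)) (q : ℕ) (hq0 : 0 < q)
    (hqsf : Squarefree q)
    (A : Matrix (Fin m) (Fin n) ℤ)
    (hA : ∀ i j, (q : ℚ) * a i j = (A i j : ℚ))
    (k : Fin m)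
    (qk : ℕ) (hqksf : Squarefree qk)
    (hqk : ∀ p : ℕ, p.Prime →
      (p ∣ qk ↔ p ∣ q ∧
        (fun j => (A k j : ZMod p)) ∉
          Submodule.span (ZMod p)
            {w : Fin n → ZMod p | ∃ i : Fin m, i < k ∧ w = fun j => (A i j : ZMod p)})) :
    Nat.card
      ((stepLattice n m a ((k : ℕ) + 1)) ⧸
        Submodule.comap (stepLattice n m a ((k : ℕ) + 1)).subtype
          (stepLattice n m a (k : ℕ))) = qk := by
  classical
  set K := stepLattice n m a (k : ℕ) with hK
  set L := stepLattice n m a ((k : ℕ) + 1) with hL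
  have hak : a k ∈ L := by
    refine mem_stepLattice.mpr ⟨0, fun i => if i = k then 1 else 0,
      fun j => ⟨0, by simp⟩, ?_, ?_⟩
    · intro i hi
      have h : i ≠ k := fun h => by subst h; exact hi (Nat.lt_succ_self _)
      simp [h]
    · simp [ite_smul]
  set N := Submodule.comap L.subtype K with hN
  set ψ : ℤ →ₗ[ℤ] ↥L ⧸ N := N.mkQ.comp (LinearMap.toSpanSingleton ℤ ↥L ⟨a k, hak⟩) with hψ
  have hψapp : ∀ z : ℤ, ψ z = Submodule.Quotient.mk (z • (⟨a k, hak⟩ : ↥L)) := fun z => rfl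
  have hker : ∀ z : ℤ, z ∈ LinearMap.ker ψ ↔ z • a k ∈ K := by
    intro z
    rw [LinearMap.mem_ker, hψapp, Submodule.Quotient.mk_eq_zero, hN, Submodule.mem_comap]
    simp
  have hsurj : Function.Surjective ψ := by
    intro xq
    obtain ⟨⟨x, hx⟩, rfl⟩ := Submodule.Quotient.mk_surjective N xq
    obtain ⟨v, c, hv, hc, hxe⟩ := mem_stepLattice.mp hx
    refine ⟨c k, ?_⟩
    rw [hψapp, Submodule.Quotient.eq, hN, Submodule.mem_comap]
    have hsplit : ∑ i, c i • a i = (∑ i, (if i = k then 0 else c i) • a i) + c k • a k := by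
      calc ∑ i, c i • a i
          = ∑ i, ((if i = k then 0 else c i) • a i + if i = k then c k • a k else 0) :=
            Finset.sum_congr rfl fun i _ => by by_cases h : i = k <;> simp [h]
        _ = _ := by rw [Finset.sum_add_distrib, Finset.sum_ite_eq']; simp
    have hxK : x - c k • a k ∈ K := by
      refine mem_stepLattice.mpr ⟨v, fun i => if i = k then 0 else c i, hv, ?_, ?_⟩
      · intro i hi
        by_cases h : i = k
        · simp [h]
        · have hci : c i = 0 := hc i fun hlt => hi (by
            have hne : (i : ℕ) ≠ (k : ℕ) := fun he => h (Fin.ext he)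
            omega)
          simp [h, hci]
      · rw [hxe, hsplit]; abel
    simpa using K.neg_mem hxK
  have e1 : Nat.card (↥L ⧸ N) = Nat.card (ℤ ⧸ LinearMap.ker ψ) :=
    (Nat.card_congr (LinearMap.quotKerEquivOfSurjective ψ hsurj).toEquiv).symm
  obtain ⟨g, hg⟩ := (IsPrincipalIdealRing.principal (LinearMap.ker ψ)).principal
  have e2 : Nat.card (ℤ ⧸ LinearMap.ker ψ) = g.natAbs := by
    rw [hg]
    exact (Nat.card_congr (Int.quotientSpanEquivZMod g).toEquiv).trans (Nat.card_zmod _)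
  have hmemI : ∀ z : ℤ, z • a k ∈ K ↔ g ∣ z := by
    intro z
    rw [← hker z, hg]
    exact Ideal.mem_span_singleton
  have hq : (q : ℚ) ≠ 0 := by positivity
  have hqmem : (q : ℤ) • a k ∈ K :=
    (smul_mem_step_iff hq0 hA k q).mpr ⟨0, fun _ _ => rfl, fun j => ⟨A k j, by simp⟩⟩
  have hgq : g ∣ (q : ℤ) := (hmemI q).mp hqmem
  set d := g.natAbs with hd
  have hdq : d ∣ q := by
    have := Int.natAbs_dvd_natAbs.mpr hgq
    simpa using this
  have hd0 : d ≠ 0 := by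
    intro h
    rw [Int.natAbs_eq_zero] at h
    subst h
    simp only [zero_dvd_iff] at hgq
    omega
  have hdsf : Squarefree d := hqsf.squarefree_of_dvd hdq
  have hdK : (d : ℤ) • a k ∈ K := (hmemI d).mpr (Int.dvd_natAbs.mpr dvd_rfl)
  have hiff : ∀ p : ℕ, p.Prime → (p ∣ d ↔ p ∣ qk) := by
    intro p hp
    by_cases hpq : p ∣ q
    · rw [hqk p hp]
      constructor
      · intro hpd
        refine ⟨hpq, fun hspan => ?_⟩
        obtain ⟨c, hc, hdvd⟩ := coeffs_of_mem_span hp hspan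
        obtain ⟨r, hr⟩ := hpq
        have hq' : (q : ℤ) = (p : ℤ) * (r : ℤ) := by exact_mod_cast hr
        have hrK : (r : ℤ) • a k ∈ K := by
          refine (smul_mem_step_iff hq0 hA k r).mpr
            ⟨fun i => r * c i, fun i hi => by simp [hc i hi], fun j => ?_⟩
          obtain ⟨e, he⟩ := hdvd j
          refine ⟨e, ?_⟩
          have hs : ∑ i, ((r : ℤ) * c i) * A i j = (r : ℤ) * ∑ i, c i * A i j := by
            rw [Finset.mul_sum]
            exact Finset.sum_congr rfl fun _ _ => by ring
          rw [hs, hq']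
          linear_combination (r : ℤ) * he
        have hdr : d ∣ r := by
          have := Int.natAbs_dvd_natAbs.mpr ((hmemI r).mp hrK)
          simpa using this
        obtain ⟨e, he⟩ := hpd.trans hdr
        have hunit : IsUnit p := hqsf p ⟨e, by rw [hr, he]; ring⟩
        exact hp.ne_one (Nat.isUnit_iff.mp hunit)
      · rintro ⟨-, hnot⟩
        by_contra hpd
        apply hnot
        obtain ⟨c, hc, hdvd⟩ := (smul_mem_step_iff hq0 hA k d).mp hdK
        exact mem_span_of_coeffs hp
          (fun h => hpd (Int.natCast_dvd_natCast.mp h)) hc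
          (fun j => dvd_trans (Int.natCast_dvd_natCast.mpr hpq) (hdvd j))
    · constructor
      · intro h; exact absurd (h.trans hdq) hpq
      · intro h; exact absurd ((hqk p hp).mp h).1 hpq
  have : d = qk :=
    Nat.dvd_antisymm (sqf_dvd_of_prime_dvd hdsf fun p hp h => (hiff p hp).mp h)
      (sqf_dvd_of_prime_dvd hqksf fun p hp h => (hiff p hp).mpr h)
  rw [e1, e2]
  exact this
end

section
/- Let Λ be a rational lattice with ℤⁿ ⊆ Λ ⊆ (1/q)ℤⁿ for some positive integer q equal to the exact common denominator of Λ (the least q with q·Λ ⊆ ℤⁿ), and suppose the unit octahedron Oⁿ = {x : ‖x‖₁ ≤ 1} is admissible with respect to Λ. If q has s distinct prime factors, then s ≤ n. -/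
open Finset Nat

theorem Finset.factorial_card_le_prod (s : Finset ℕ) (hs : ∀ a ∈ s, 0 < a) :
    (#s)! ≤ ∏ a ∈ s, a := by
  induction s using Finset.induction_on_max with
  | empty => simp
  | insert a s hlt ih =>
    have has : a ∉ s := fun h => (hlt a h).false
    have hcard : #s + 1 ≤ a := by
      have : s ⊆ Ioo 0 a := fun b hb =>
        mem_Ioo.2 ⟨hs b (mem_insert_of_mem hb), hlt b hb⟩
      have := card_le_card this
      simp only [Nat.card_Ioo] at this
      have := hs a (mem_insert_self a s)
      omega
    rw [card_insert_of_notMem has, prod_insert has, factorial_succ]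
    exact Nat.mul_le_mul hcard (ih fun b hb => hs b (mem_insert_of_mem hb))

theorem Finset.two_pow_card_mul_factorial_card_le_prod_of_odd (s : Finset ℕ)
    (hs : ∀ a ∈ s, Odd a ∧ 1 < a) : 2 ^ #s * (#s)! ≤ ∏ a ∈ s, a := by
  have hinj : Set.InjOn (· / 2) s := fun a ha b hb hab => by
    obtain ⟨⟨k, rfl⟩, -⟩ := hs a ha
    obtain ⟨⟨l, rfl⟩, -⟩ := hs b hb
    simp only at hab
    omega
  have hpos : ∀ b ∈ s.image (· / 2), 0 < b := by
    simp only [mem_image]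
    rintro _ ⟨a, ha, rfl⟩
    have := (hs a ha).2
    omega
  calc 2 ^ #s * (#s)! ≤ 2 ^ #s * ∏ b ∈ s.image (· / 2), b := by
        gcongr
        simpa [card_image_of_injOn hinj] using factorial_card_le_prod _ hpos
    _ = ∏ a ∈ s, 2 * (a / 2) := by rw [prod_image hinj, prod_mul_distrib, prod_const]
    _ ≤ ∏ a ∈ s, a := prod_le_prod' fun a _ => Nat.mul_div_le a 2

theorem two_pow_succ_mul_factorial_le_prod_of_prime {s : Finset ℕ} (hs : ∀ p ∈ s, p.Prime)
    {k : ℕ} (hk : k < #s) : 2 ^ (k + 1) * k ! ≤ ∏ p ∈ s, p := by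
  have hodd : ∀ p ∈ s.erase 2, Odd p ∧ 1 < p := fun p hp =>
    have hp' := hs p (mem_of_mem_erase hp)
    ⟨hp'.odd_of_ne_two (ne_of_mem_erase hp), hp'.one_lt⟩
  have hodd_le := (s.erase 2).two_pow_card_mul_factorial_card_le_prod_of_odd hodd
  by_cases h2 : 2 ∈ s
  · have hcard : k ≤ #(s.erase 2) := by rw [card_erase_of_mem h2]; omega
    rw [← mul_prod_erase s (fun p => p) h2, pow_succ', mul_assoc]
    gcongr 2 * ?_
    exact le_trans (by gcongr; norm_num) hodd_le
  · rw [erase_eq_of_notMem h2] at hodd_le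
    exact le_trans (Nat.mul_le_mul (Nat.pow_le_pow_right two_pos hk) (factorial_le hk.le)) hodd_le

theorem pow_lt_choose_mul {n q : ℕ} (hq : 2 ^ (n + 1) * n ! ≤ q) :
    q ^ n < (n + q / 2).choose (q / 2) * q := by
  set r := q / 2
  have hchoose : (r + 1) ^ n ≤ n ! * (n + r).choose r := by
    rw [add_comm n r, choose_symm_add, ← ascFactorial_eq_factorial_mul_choose]
    exact pow_succ_le_ascFactorial (r + 1) n
  have hq_le : q ^ n ≤ 2 ^ n * n ! * (n + r).choose r :=
    calc q ^ n ≤ (2 * (r + 1)) ^ n := Nat.pow_le_pow_left (by omega) n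
      _ ≤ 2 ^ n * (n ! * (n + r).choose r) := by rw [mul_pow]; gcongr
      _ = _ := by ring
  have hpos : 0 < q ^ n := Nat.pow_pos (lt_of_lt_of_le (by positivity) hq)
  calc q ^ n < 2 * q ^ n := by omega
    _ ≤ 2 * (2 ^ n * n ! * (n + r).choose r) := by gcongr
    _ = 2 ^ (n + 1) * n ! * (n + r).choose r := by ring
    _ ≤ (n + r).choose r * q := by rw [mul_comm]; gcongr

theorem intCast_mem_of_intLattice_le {n : ℕ} {Λ : Submodule ℤ (Fin n → ℚ)}
    (hZ : intLattice n ≤ Λ) (c : Fin n → ℤ) : (fun i => (c i : ℚ)) ∈ Λ := by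
  have hc : (fun i => (c i : ℚ)) = ∑ i, c i • (Pi.single i 1 : Fin n → ℚ) := by
    ext j
    simp [Pi.single_apply]
  rw [hc]
  exact Λ.sum_mem fun i _ => Λ.smul_mem _ (hZ (Submodule.subset_span ⟨i, rfl⟩))

section Residues

variable {ι : Type*}

def castDiv (ι : Type*) (q : ℕ) : (ι → ℤ) →+ (ι → ℚ) :=
  AddMonoidHom.mk' (fun a i => a i / q) fun a b => by ext i; simp [add_div]

@[simp]
theorem castDiv_apply (q : ℕ) (a : ι → ℤ) (i : ι) : castDiv ι q a i = a i / q := rfl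

theorem castDiv_injective {q : ℕ} (hq : q ≠ 0) : Function.Injective (castDiv ι q) := by
  intro a b h
  ext i
  have := congrFun h i
  rwa [castDiv_apply, castDiv_apply, div_left_inj' (mod_cast hq), Int.cast_inj] at this

theorem sum_abs_castDiv_le_one [Fintype ι] {q : ℕ} {v : ι → ℤ} (hv : ∑ i, |v i| ≤ q) :
    ∑ i, |castDiv ι q v i| ≤ 1 := by
  simp only [castDiv_apply, abs_div, Nat.abs_cast, ← sum_div]
  exact div_le_one_of_le₀ (mod_cast hv) q.cast_nonneg

theorem abs_castDiv_apply_lt_one {q : ℕ} {v : ι → ℤ} {i : ι} (hv : |v i| < q) :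
    |castDiv ι q v i| < 1 := by
  have hq : (0 : ℚ) < q := mod_cast (abs_nonneg _).trans_lt hv
  rw [castDiv_apply, abs_div, Nat.abs_cast, div_lt_one hq]
  exact_mod_cast hv

def castZMod (ι : Type*) (q : ℕ) : (ι → ℤ) →+ (ι → ZMod q) :=
  (Int.castAddHom (ZMod q)).compLeft ι

@[simp]
theorem castZMod_apply (q : ℕ) (a : ι → ℤ) (i : ι) : castZMod ι q a i = a i := rfl

def IsCommonDenominator (Λ : Submodule ℤ (ι → ℚ)) (q : ℕ) : Prop :=
  ∀ x ∈ Λ, ∀ i, ((q : ℚ) * x i).den = 1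

/-- The image of `qΛ ∩ ℤ^ι` in `(ℤ/q)^ι`; when `ℤ^ι ⊆ Λ ⊆ q⁻¹ℤ^ι` it is isomorphic to `Λ/ℤ^ι`. -/
def residues (Λ : Submodule ℤ (ι → ℚ)) (q : ℕ) : AddSubgroup (ι → ZMod q) :=
  (Λ.toAddSubgroup.comap (castDiv ι q)).map (castZMod ι q)

variable {Λ : Submodule ℤ (ι → ℚ)} {q : ℕ}

theorem castDiv_mem_of_castZMod_mem_residues (hq : q ≠ 0)
    (hZ : ∀ c : ι → ℤ, (fun i => (c i : ℚ)) ∈ Λ) {v : ι → ℤ}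
    (hv : castZMod ι q v ∈ residues Λ q) : castDiv ι q v ∈ Λ := by
  obtain ⟨a, ha, hav⟩ := hv
  have hdvd : ∀ i, (q : ℤ) ∣ v i - a i := fun i => by
    rw [← ZMod.intCast_zmod_eq_zero_iff_dvd, Int.cast_sub, ← castZMod_apply, ← castZMod_apply,
      hav, sub_self]
  choose c hc using hdvd
  have hsum : castDiv ι q v = castDiv ι q a + fun i => (c i : ℚ) := by
    ext i
    have hvi : (v i : ℚ) = a i + q * c i := mod_cast (by linarith [hc i] : v i = a i + q * c i)
    rw [Pi.add_apply, castDiv_apply, castDiv_apply, hvi, add_div,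
      mul_div_cancel_left₀ _ (Nat.cast_ne_zero.2 hq)]
  rw [hsum]
  exact Λ.add_mem ha (hZ c)

theorem isCommonDenominator_card_residues [NeZero q] (hden : IsCommonDenominator Λ q) :
    IsCommonDenominator Λ (Nat.card (residues Λ q)) := by
  intro x hx i
  set N := Nat.card (residues Λ q)
  have hq : (q : ℚ) ≠ 0 := mod_cast NeZero.ne q
  set a : ι → ℤ := fun j => ((q : ℚ) * x j).num
  have hax : castDiv ι q a = x := by
    ext j
    simp only [castDiv_apply, a, (Rat.den_eq_one_iff _).1 (hden x hx j)]
    exact mul_div_cancel_left₀ _ hq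
  have hNa : castZMod ι q (N • a) = 0 := by
    rw [map_nsmul]
    have ha : castZMod ι q a ∈ residues Λ q := ⟨a, by simpa [← hax] using hx, rfl⟩
    exact congrArg Subtype.val (card_nsmul_eq_zero' (x := (⟨_, ha⟩ : residues Λ q)))
  have hdvd : (q : ℤ) ∣ N * a i := by
    rw [← ZMod.intCast_zmod_eq_zero_iff_dvd]
    simpa using congrFun hNa i
  have hint : (N : ℚ) * x i = ((N * a i / q : ℤ) : ℚ) := by
    rw [← hax, castDiv_apply, Int.cast_div hdvd (mod_cast hq)]
    push_cast
    ring
  rw [hint]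
  exact Rat.den_intCast _

theorem card_quotient_residues_mul_le [Fintype ι] (h : q ≤ Nat.card (residues Λ q)) :
    Nat.card ((ι → ZMod q) ⧸ residues Λ q) * q ≤ q ^ Fintype.card ι := by
  have hcard := AddSubgroup.card_eq_card_quotient_mul_card_addSubgroup (residues Λ q)
  rw [Nat.card_pi, prod_const, Nat.card_zmod, Finset.card_univ] at hcard
  rw [hcard]
  exact Nat.mul_le_mul_left _ h

end Residues

section Pigeonhole

variable {ι : Type*} [Fintype ι] [DecidableEq ι] {r : ℕ}

/-- A multiset of size `r` on `Option ι` encodes a point of `ℕ^ι` with coordinate sum at most `r`: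
its multiplicities at the `some i`, with `none` taking up the slack. -/
def Sym.countsSome (m : Sym (Option ι) r) (i : ι) : ℤ :=
  (m : Multiset (Option ι)).count (some i)

theorem Sym.sum_count_none_add_countsSome (m : Sym (Option ι) r) :
    (m : Multiset (Option ι)).count none + ∑ i, m.countsSome i = r := by
  have := Multiset.sum_count_eq_card (s := univ) (m := (m : Multiset (Option ι))) (by simp)
  rw [Fintype.sum_option, Sym.card_coe] at this
  simp only [countsSome]
  exact_mod_cast this

theorem Sym.countsSome_injective : Function.Injective (Sym.countsSome (ι := ι) (r := r)) := by
  intro m m' h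
  have hnone := m.sum_count_none_add_countsSome
  rw [h, ← m'.sum_count_none_add_countsSome] at hnone
  apply Sym.ext
  ext o
  cases o with
  | none => exact_mod_cast add_right_cancel hnone
  | some i => exact Nat.cast_inj.mp (congrFun h i)

theorem Sym.sum_countsSome_le (m : Sym (Option ι) r) : ∑ i, m.countsSome i ≤ r := by
  have := m.sum_count_none_add_countsSome
  omega

theorem Sym.countsSome_mem_Icc (m : Sym (Option ι) r) (i : ι) :
    m.countsSome i ∈ Set.Icc 0 (r : ℤ) :=
  have hnonneg (j : ι) : 0 ≤ m.countsSome j := Int.natCast_nonneg _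
  ⟨hnonneg i, (single_le_sum (fun j _ => hnonneg j) (mem_univ i)).trans m.sum_countsSome_le⟩

theorem exists_castZMod_mem_of_card_quotient_lt {q : ℕ} [NeZero q]
    (A : AddSubgroup (ι → ZMod q))
    (h : Nat.card ((ι → ZMod q) ⧸ A) < (Fintype.card ι + r).choose r) :
    ∃ v : ι → ℤ, v ≠ 0 ∧ castZMod ι q v ∈ A ∧ ∑ i, |v i| ≤ 2 * r ∧ ∀ i, |v i| ≤ r := by
  let f : Sym (Option ι) r → (ι → ZMod q) ⧸ A := fun m => castZMod ι q m.countsSome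
  obtain ⟨m, m', hne, heq⟩ : ∃ m m', m ≠ m' ∧ f m = f m' := by
    by_contra! hinj
    refine (Nat.card_le_card_of_injective f fun m m' hm => ?_).not_gt ?_
    · exact not_imp_not.mp (hinj m m') hm
    · simpa [Nat.card_eq_fintype_card, Sym.card_sym_eq_choose] using h
  refine ⟨m.countsSome - m'.countsSome, sub_ne_zero.2 (Sym.countsSome_injective.ne hne), ?_, ?_,
    fun i => ?_⟩
  · rw [map_sub]
    exact QuotientAddGroup.eq_iff_sub_mem.mp heq
  · calc ∑ i, |m.countsSome i - m'.countsSome i|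
        ≤ ∑ i, (m.countsSome i + m'.countsSome i) := by
          gcongr with i
          obtain ⟨h0, -⟩ := m.countsSome_mem_Icc i
          obtain ⟨h0', -⟩ := m'.countsSome_mem_Icc i
          rw [abs_le]
          constructor <;> linarith
      _ ≤ 2 * r := by
          rw [sum_add_distrib]
          linarith [m.sum_countsSome_le, m'.sum_countsSome_le]
  · obtain ⟨h0, h1⟩ := m.countsSome_mem_Icc i
    obtain ⟨h0', h1'⟩ := m'.countsSome_mem_Icc i
    exact abs_sub_le_of_nonneg_of_le h0 h1 h0' h1'

end Pigeonhole

/-- if ℤⁿ ⊆ Λ ⊆ (1/q)ℤⁿ with q the exact common denominator of Λ and the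
unit octahedron is admissible for Λ, then q has at most n distinct prime factors. -/
theorem stmt11 (n : ℕ) (Λ : Submodule ℤ (Fin n → ℚ)) (hZ : intLattice n ≤ Λ)
    (q : ℕ) (hq0 : 0 < q)
    (hden : ∀ x ∈ Λ, ∀ i, ((q : ℚ) * x i).den = 1)
    (hmin : ∀ q' : ℕ, 0 < q' → (∀ x ∈ Λ, ∀ i, ((q' : ℚ) * x i).den = 1) → q ≤ q')
    (hadm : ∀ x ∈ Λ, (∑ i, |x i|) ≤ 1 →
      x = 0 ∨ ∃ i : Fin n, x = Pi.single i 1 ∨ x = -Pi.single i 1) :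
    q.primeFactors.card ≤ n := by
  by_contra! hs
  have hq : 2 ^ (n + 1) * n ! ≤ q :=
    (two_pow_succ_mul_factorial_le_prod_of_prime (fun _ => prime_of_mem_primeFactors) hs).trans
      (le_of_dvd hq0 (prod_primeFactors_dvd q))
  have : NeZero q := ⟨hq0.ne'⟩
  have hcard : Nat.card ((Fin n → ZMod q) ⧸ residues Λ q) <
      (Fintype.card (Fin n) + q / 2).choose (q / 2) := by
    have hquot := card_quotient_residues_mul_le
      (hmin _ Nat.card_pos (isCommonDenominator_card_residues (Λ := Λ) hden))
    rw [Fintype.card_fin] at hquot ⊢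
    exact Nat.lt_of_mul_lt_mul_right (hquot.trans_lt (pow_lt_choose_mul hq))
  obtain ⟨v, hv0, hvA, hv1, hv⟩ := exists_castZMod_mem_of_card_quotient_lt _ hcard
  have hvΛ := castDiv_mem_of_castZMod_mem_residues hq0.ne' (intCast_mem_of_intLattice_le hZ) hvA
  have hsmall : ∀ i, |castDiv (Fin n) q v i| < 1 := fun i =>
    abs_castDiv_apply_lt_one ((hv i).trans_lt (by omega))
  rcases hadm _ hvΛ (sum_abs_castDiv_le_one (hv1.trans (by omega))) with h | ⟨j, h | h⟩
  · exact hv0 (castDiv_injective hq0.ne' (h.trans (map_zero _).symm))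
  · exact (hsmall j).ne (by rw [h]; simp)
  · exact (hsmall j).ne (by rw [h]; simp)
end
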